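/- Fix r ≥ 1, and for a cube Q write Q′ := rQ (the concentric cube with r times the sidelength). Let T be a linear operator such that for every ε > 0, every dyadic cube Q₀, and every f ∈ L¹(ℝ^N; ℝ) supported on Q₀′ there exists a collection G of pairwise disjoint dyadic subcubes of Q₀ satisfying: (1) Σ_{Q∈G} |Q| ≤ ε|Q₀|; (2) |Tf(x) − Σ_{Q∈G} 1_Q(x)·T(f·1_{Q′})(x)| ≤ C·ε⁻¹·⟨|f|⟩_{Q₀′} a.e. on Q₀, with C = C(T,N) independent of f; (3) the same bound as in (2) holds with G replaced by any collection Ḡ of pairwise disjoint dyadic subcubes of Q₀ that covers G (i.e. every Q ∈ G is contained in some R ∈ Ḡ). Then for every δ ∈ (0,1), every dyadic cube Q₀, and every f ∈ L¹(ℝ^N; ℝ^d) supported on Q₀′ there exists a family G₁ of pairwise disjoint dyadic subcubes of Q₀ with Σ_{Q∈G₁} |Q| ≤ δ|Q₀| and Tf(x) ∈ C′·⟨⟨f⟩⟩_{Q₀′} + Σ_{Q∈G₁} 1_Q(x)·T(f·1_{Q′})(x) a.e. on Q₀, where C′ = C′(T, N, d, δ) and T acts componentwise on vector-valued functions. -/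

import Mathlib

/-!
For a bounded symmetric convex set `K ⊆ ℝ^d` there are `d` linear functionals `Φ_j` such that
`|Φ_j v| ≤ A · sup_K Φ_j` for all `j` forces `v ∈ 2dA · K`: take the coordinate functionals of a basis
of `span K` drawn from `K` with almost maximal determinant (Auerbach), completed by functionals
vanishing on `span K`. For `K = ⟨⟨f⟩⟩_{Q₀'}` one has `sup_K Φ = ⟨|Φ ∘ f|⟩_{Q₀'}`, so it suffices to
apply the scalar hypothesis with `ε = δ / d` to the `d` functions `Φ_j ∘ f`. The `d` resulting
families are replaced by the maximal cubes of their union: this family is disjoint, covers each of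
them (so property (3) applies to it), and has total measure at most `d ε |Q₀| = δ |Q₀|`.
-/

open MeasureTheory Set Matrix
open scoped ENNReal BigOperators NNReal Pointwise

noncomputable section

namespace CBD

/-- The Euclidean norm of a vector in `ℝ^n` given as a plain function. -/
def vnorm {n : ℕ} (v : Fin n → ℝ) : ℝ := Real.sqrt (∑ i, v i ^ 2)

/-- An axis-parallel half-open cube in `ℝ^N`. -/
structure Cube (N : ℕ) where
  corner : Fin N → ℝ
  side : ℝ
  side_pos : 0 < side

namespace Cube

variable {N : ℕ}

/-- The subset of `ℝ^N` determined by the cube. -/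
def set (Q : Cube N) : Set (Fin N → ℝ) :=
  {x | ∀ i, Q.corner i ≤ x i ∧ x i < Q.corner i + Q.side}

/-- The volume `|Q|` of the cube. -/
def vol (Q : Cube N) : ℝ := Q.side ^ N

/-- The concentric dilation `rQ` (intended for `r ≥ 1`; implemented with `max r 1`). -/
def dilate (Q : Cube N) (r : ℝ) : Cube N where
  corner := fun i => Q.corner i + Q.side / 2 - max r 1 * Q.side / 2
  side := max r 1 * Q.side
  side_pos := mul_pos (lt_of_lt_of_le one_pos (le_max_right r 1)) Q.side_pos

/-- `Q` belongs to the standard dyadic lattice `D`: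
`Q = 2^{-k}([0,1)^N + m)` for some `k ∈ ℤ`, `m ∈ ℤ^N`. -/
def IsDyadic (Q : Cube N) : Prop :=
  ∃ (k : ℤ) (m : Fin N → ℤ), Q.side = (2:ℝ) ^ (-k) ∧ ∀ i, Q.corner i = (2:ℝ) ^ (-k) * (m i : ℝ)

/-- The subcube of `Q` of dyadic generation `k` in position `m`. -/
def subCube (Q : Cube N) (k : ℕ) (m : Fin N → ℕ) : Cube N where
  corner := fun i => Q.corner i + Q.side * (m i : ℝ) / 2 ^ k
  side := Q.side / 2 ^ k
  side_pos := div_pos Q.side_pos (by positivity)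

/-- `R` is a dyadic subcube of `Q` (relative dyadic lattice `D(Q)`, including `Q` itself). -/
def IsDyadicSub (Q R : Cube N) : Prop :=
  ∃ (k : ℕ) (m : Fin N → ℕ), (∀ i, m i < 2 ^ k) ∧ R = Q.subCube k m

end Cube

variable {N d : ℕ}

/-- The dyadic lattice, as a set of cubes. -/
def dyadicCubes (N : ℕ) : Set (Cube N) := {Q | Q.IsDyadic}

/-- All cubes in `ℝ^N`. -/
def allCubes (N : ℕ) : Set (Cube N) := Set.univ

/-- The average `⟨g⟩_Q = |Q|⁻¹ ∫_Q g`. -/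
def avg (Q : Cube N) (g : (Fin N → ℝ) → ℝ) : ℝ :=
  (Q.vol)⁻¹ * ∫ y in Q.set, g y

/-- The entrywise average `⟨W⟩_Q` of a matrix-valued function. -/
def matAvg (Q : Cube N) (W : (Fin N → ℝ) → Matrix (Fin d) (Fin d) ℝ) :
    Matrix (Fin d) (Fin d) ℝ :=
  Matrix.of fun i j => avg Q fun x => W x i j

/-- The positive semidefinite square root of a matrix (junk value `0` off psd matrices). -/
def msqrt (A : Matrix (Fin d) (Fin d) ℝ) : Matrix (Fin d) (Fin d) ℝ :=
  letI := Classical.dec A.PosSemidef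
  if h : A.PosSemidef then
    (h.1.eigenvectorUnitary : Matrix (Fin d) (Fin d) ℝ) *
      Matrix.diagonal (fun i => Real.sqrt (h.1.eigenvalues i)) *
      (star h.1.eigenvectorUnitary : Matrix (Fin d) (Fin d) ℝ)
  else 0

/-- The `ℓ² → ℓ²` operator norm of a `d × d` matrix. -/
def matOpNorm (A : Matrix (Fin d) (Fin d) ℝ) : ℝ :=
  sSup {t | ∃ v : Fin d → ℝ, vnorm v ≤ 1 ∧ t = vnorm (A.mulVec v)}

/-- A `d`-dimensional matrix weight: locally integrable, positive semidefinite values. -/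
def IsMatrixWeight (W : (Fin N → ℝ) → Matrix (Fin d) (Fin d) ℝ) : Prop :=
  (∀ x, (W x).PosSemidef) ∧ ∀ i j, LocallyIntegrable (fun x => W x i j) volume

/-- A scalar weight: nonnegative and locally integrable. -/
def IsScalarWeight (w : (Fin N → ℝ) → ℝ) : Prop :=
  (∀ x, 0 ≤ w x) ∧ LocallyIntegrable w volume

/-- The maximal function adapted to the cube `Q`:
`M_Q w(x) = sup {⟨w⟩_R : R ∈ D(Q), x ∈ R}` (and `0` off `Q`). -/
def MQ (Q : Cube N) (w : (Fin N → ℝ) → ℝ) (x : Fin N → ℝ) : ℝ :=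
  sSup ({0} ∪ {t | ∃ R : Cube N, Q.IsDyadicSub R ∧ x ∈ R.set ∧ t = avg R w})

/-- Admissible `A∞` constants of a scalar weight, over a collection `𝒬` of cubes. -/
def AinftyOn (𝒬 : Set (Cube N)) (w : (Fin N → ℝ) → ℝ) : Set ℝ :=
  {C | 0 ≤ C ∧ ∀ Q ∈ 𝒬, avg Q (MQ Q w) ≤ C * avg Q w}

/-- The `A∞` characteristic (best admissible constant) of a scalar weight. -/
def AinftyChar (𝒬 : Set (Cube N)) (w : (Fin N → ℝ) → ℝ) : ℝ := sInf (AinftyOn 𝒬 w)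

/-- The scalar weight `w_e(x) = (W(x)e, e)` associated to a matrix weight and `e ∈ ℝ^d`. -/
def we (W : (Fin N → ℝ) → Matrix (Fin d) (Fin d) ℝ) (e : Fin d → ℝ) :
    (Fin N → ℝ) → ℝ := fun x => e ⬝ᵥ (W x).mulVec e

/-- Admissible constants for the scalar `A∞` characteristic of a matrix weight. -/
def matAinftyScOn (𝒬 : Set (Cube N)) (W : (Fin N → ℝ) → Matrix (Fin d) (Fin d) ℝ) : Set ℝ :=
  {C | 0 ≤ C ∧ ∀ e : Fin d → ℝ, ∀ Q ∈ 𝒬, avg Q (MQ Q (we W e)) ≤ C * avg Q (we W e)}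

/-- The scalar `A∞` characteristic `[W]^{sc}_{A∞} = sup_e [w_e]_{A∞}` of a matrix weight. -/
def matAinftyScChar (𝒬 : Set (Cube N)) (W : (Fin N → ℝ) → Matrix (Fin d) (Fin d) ℝ) : ℝ :=
  sInf (matAinftyScOn 𝒬 W)

/-- Admissible constants for the two-weight matrix `A₂` characteristic
`[W,V]_{A₂} = sup_Q ‖⟨W⟩_Q^{1/2} ⟨V⟩_Q^{1/2}‖²`. -/
def A2pairOn (𝒬 : Set (Cube N)) (W V : (Fin N → ℝ) → Matrix (Fin d) (Fin d) ℝ) : Set ℝ :=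
  {C | ∀ Q ∈ 𝒬, matOpNorm (msqrt (matAvg Q W) * msqrt (matAvg Q V)) ^ 2 ≤ C}

/-- The two-weight matrix `A₂` characteristic. -/
def A2pairChar (𝒬 : Set (Cube N)) (W V : (Fin N → ℝ) → Matrix (Fin d) (Fin d) ℝ) : ℝ :=
  sInf (A2pairOn 𝒬 W V)

/-- Admissible constants for the scalar `A₂` characteristic `sup_Q ⟨w⟩_Q ⟨w⁻¹⟩_Q`. -/
def scalarA2On (𝒬 : Set (Cube N)) (w : (Fin N → ℝ) → ℝ) : Set ℝ :=
  {C | ∀ Q ∈ 𝒬, avg Q w * avg Q (fun x => (w x)⁻¹) ≤ C}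

/-- The scalar `A₂` characteristic. -/
def scalarA2Char (𝒬 : Set (Cube N)) (w : (Fin N → ℝ) → ℝ) : ℝ := sInf (scalarA2On 𝒬 w)

/-- An `ω`-Calderón–Zygmund operator on `ℝ^N`: a linear operator, bounded on `L²`,
with a kernel representation off the support, whose kernel satisfies the standard size
condition and the `ω`-smoothness condition, `ω` being a modulus of continuity. -/
structure CZO (N : ℕ) where
  op : ((Fin N → ℝ) → ℝ) →ₗ[ℝ] ((Fin N → ℝ) → ℝ)
  K : (Fin N → ℝ) → (Fin N → ℝ) → ℝ
  ω : ℝ → ℝ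
  CK : ℝ
  normBound : ℝ
  bounded : ∀ f : (Fin N → ℝ) → ℝ, MemLp f 2 volume →
    MemLp (op f) 2 volume ∧
      eLpNorm (op f) 2 volume ≤ ENNReal.ofReal normBound * eLpNorm f 2 volume
  repr : ∀ f : (Fin N → ℝ) → ℝ, MemLp f 2 volume → ∀ x ∉ tsupport f,
    op f x = ∫ y, K x y * f y
  size : ∀ x y : Fin N → ℝ, x ≠ y → |K x y| ≤ CK / vnorm (x - y) ^ N
  smooth : ∀ x x' y : Fin N → ℝ, x ≠ y → vnorm (x - x') ≤ vnorm (x - y) / 2 →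
    |K x y - K x' y| + |K y x - K y x'| ≤
      ω (vnorm (x - x') / vnorm (x - y)) / vnorm (x - y) ^ N
  omega_zero : ω 0 = 0
  omega_mono : MonotoneOn ω (Set.Ici 0)
  omega_subadd : ∀ s t : ℝ, 0 ≤ s → 0 ≤ t → ω (s + t) ≤ ω s + ω t

/-- The Dini condition `∫₀¹ ω(t) dt/t < ∞` for a modulus of continuity. -/
def Dini (ω : ℝ → ℝ) : Prop :=
  IntegrableOn (fun t => ω t / t) (Set.Ioc (0:ℝ) 1) volume

/-- Componentwise (i.e. `T ⊗ I_d`) action of a scalar operator on vector-valued functions. -/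
def vecApply (T : ((Fin N → ℝ) → ℝ) → ((Fin N → ℝ) → ℝ))
    (f : (Fin N → ℝ) → Fin d → ℝ) : (Fin N → ℝ) → Fin d → ℝ :=
  fun x i => T (fun y => f y i) x

/-- `T` maps `L²` to `L²` with operator norm at most `M`. -/
def L2OpNormLe (T : ((Fin N → ℝ) → ℝ) → ((Fin N → ℝ) → ℝ)) (M : ℝ) : Prop :=
  ∀ f : (Fin N → ℝ) → ℝ, MemLp f 2 volume →
    MemLp (T f) 2 volume ∧ eLpNorm (T f) 2 volume ≤ ENNReal.ofReal M * eLpNorm f 2 volume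

/-- `T` is bounded on `L²`. -/
def L2Bounded (T : ((Fin N → ℝ) → ℝ) → ((Fin N → ℝ) → ℝ)) : Prop :=
  ∃ M : ℝ, L2OpNormLe T M

/-- The family of kernels of a (generalized big) Haar shift of complexity `r`:
`K_Q` is supported on `Q × Q`, bounded by `|Q|⁻¹`, constant on products of
`(r+1)`-st generation dyadic subcubes of `Q`, and vanishes for non-dyadic `Q`. -/
structure HaarShiftKernel (N : ℕ) (r : ℕ) where
  K : Cube N → (Fin N → ℝ) → (Fin N → ℝ) → ℝ
  measK : ∀ Q : Cube N, Measurable (Function.uncurry (K Q))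
  suppK : ∀ Q : Cube N, ∀ x y, K Q x y ≠ 0 → x ∈ Q.set ∧ y ∈ Q.set
  bddK : ∀ Q : Cube N, ∀ x y, |K Q x y| ≤ (Cube.vol Q)⁻¹
  constK : ∀ Q : Cube N, ∀ m m' : Fin N → ℕ,
    (∀ i, m i < 2 ^ (r + 1)) → (∀ i, m' i < 2 ^ (r + 1)) →
    ∀ x x' y y', x ∈ (Q.subCube (r + 1) m).set → x' ∈ (Q.subCube (r + 1) m).set →
      y ∈ (Q.subCube (r + 1) m').set → y' ∈ (Q.subCube (r + 1) m').set →
      K Q x y = K Q x' y'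
  dyadicK : ∀ Q : Cube N, ¬Q.IsDyadic → K Q = 0

/-- The operator `𝕊 = Σ_{Q ∈ D} T_Q` associated to a family of Haar shift kernels. -/
def hsApply {r : ℕ} (S : HaarShiftKernel N r) (f : (Fin N → ℝ) → ℝ) : (Fin N → ℝ) → ℝ :=
  fun x => ∑' Q : Cube N, ∫ y, S.K Q x y * f y

/-- The cancellation conditions `T_Q 1_Q = 0`, `T_Q^* 1_Q = 0` making a generalized
big Haar shift a big Haar shift. -/
def IsBigShift {r : ℕ} (S : HaarShiftKernel N r) : Prop :=
  (∀ Q : Cube N, ∀ x, (∫ y, S.K Q x y) = 0) ∧ (∀ Q : Cube N, ∀ y, (∫ x, S.K Q x y) = 0)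

/-- The sublattice `D̃ = ∪_j D_{k+(r+1)j}` of the dyadic lattice. -/
def Dtilde (N r k : ℕ) : Set (Cube N) :=
  {Q | Q.IsDyadic ∧ ∃ j : ℤ, Q.side = (2:ℝ) ^ (-((k : ℤ) + (r + 1) * j))}

/-- The Haar shift is `r`-separated with lattice parameter `k`:
`T_Q ≠ 0` only for `Q ∈ D̃`. -/
def SeparatedKernel {r : ℕ} (S : HaarShiftKernel N r) (k : ℕ) : Prop :=
  ∀ Q : Cube N, S.K Q ≠ 0 → Q ∈ Dtilde N r k

/-- The martingale difference `Δ_R b = Σ_{R' child of R} ⟨b⟩_{R'} 1_{R'} - ⟨b⟩_R 1_R`. -/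
def haarDelta (R : Cube N) (b : (Fin N → ℝ) → ℝ) (x : Fin N → ℝ) : ℝ :=
  (∑ m : Fin N → Fin 2, Set.indicator (R.subCube 1 fun i => (m i : ℕ)).set
      (fun _ => avg (R.subCube 1 fun i => (m i : ℕ)) b) x)
    - Set.indicator R.set (fun _ => avg R b) x

/-- The paraproduct of order `r` with symbol `b`:
`Π_b^r f = Σ_{Q ∈ D} ⟨f⟩_Q Σ_{R ∈ ch^r Q} Δ_R b`. -/
def paraApply (r : ℕ) (b f : (Fin N → ℝ) → ℝ) : (Fin N → ℝ) → ℝ :=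
  fun x => ∑' Q : dyadicCubes N,
    avg Q.val f * ∑ m : Fin N → Fin (2 ^ r), haarDelta (Q.val.subCube r fun i => (m i : ℕ)) b x

/-- The paraproduct `Π_b^r` is `r`-separated with lattice parameter `k`. -/
def SeparatedPara (r : ℕ) (b : (Fin N → ℝ) → ℝ) (k : ℕ) : Prop :=
  ∀ Q : Cube N, Q.IsDyadic →
    (∃ x, (∑ m : Fin N → Fin (2 ^ r), haarDelta (Q.subCube r fun i => (m i : ℕ)) b x) ≠ 0) →
    Q ∈ Dtilde N r k

/-- `T` is a big Haar shift of complexity `r`, or a paraproduct of order `r`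
with `L²` norm at most `2^{-Nr/2}`. -/
def IsShiftOrParaproduct (N r : ℕ) (T : ((Fin N → ℝ) → ℝ) → ((Fin N → ℝ) → ℝ)) : Prop :=
  (∃ S : HaarShiftKernel N r, IsBigShift S ∧ L2Bounded (hsApply S) ∧ T = hsApply S) ∨
  (∃ b : (Fin N → ℝ) → ℝ, LocallyIntegrable b volume ∧
      L2OpNormLe (paraApply r b) (Real.sqrt ((2:ℝ) ^ (N * r)))⁻¹ ∧ T = paraApply r b)

/-- `T` is an `r`-separated big Haar shift of complexity `r`, or an `r`-separated
paraproduct of order `r` with `L²` norm at most `2^{-Nr/2}`; `k ≤ r` is the lattice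
parameter of the separation sublattice `D̃`. -/
def IsSeparatedShiftOrParaproduct (N r k : ℕ)
    (T : ((Fin N → ℝ) → ℝ) → ((Fin N → ℝ) → ℝ)) : Prop :=
  k ≤ r ∧
  ((∃ S : HaarShiftKernel N r, IsBigShift S ∧ L2Bounded (hsApply S) ∧
      SeparatedKernel S k ∧ T = hsApply S) ∨
   (∃ b : (Fin N → ℝ) → ℝ, LocallyIntegrable b volume ∧
      L2OpNormLe (paraApply r b) (Real.sqrt ((2:ℝ) ^ (N * r)))⁻¹ ∧
      SeparatedPara r b k ∧ T = paraApply r b))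

/-- The convex-body average `⟨⟨f⟩⟩_Q = {⟨φ f⟩_Q : ‖φ‖_∞ ≤ 1}`. -/
def cbAvg (Q : Cube N) (f : (Fin N → ℝ) → Fin d → ℝ) : Set (Fin d → ℝ) :=
  {v | ∃ φ : (Fin N → ℝ) → ℝ, Measurable φ ∧ (∀ x, |φ x| ≤ 1) ∧
        v = fun i => avg Q fun x => φ x * f x i}

/-- A weakly `η`-sparse family of cubes: there are pairwise disjoint measurable
subsets `E_Q ⊆ Q` with `|E_Q| ≥ η |Q|`. -/
def WeaklySparse (S : Set (Cube N)) (η : ℝ) : Prop :=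
  ∃ E : Cube N → Set (Fin N → ℝ),
    (∀ Q ∈ S, E Q ⊆ Q.set ∧ MeasurableSet (E Q) ∧ ENNReal.ofReal (η * Q.vol) ≤ volume (E Q)) ∧
    S.PairwiseDisjoint E

/-- The value at `x` of the convex-body sparse operator
`𝐋_S f = Σ_{Q ∈ S} ⟨⟨f⟩⟩_Q 1_Q` (an infinite Minkowski sum): all convergent sums
`Σ_Q g(Q)` with `g(Q) ∈ ⟨⟨f⟩⟩_Q` whenever `Q ∈ S` contains `x`, and `g(Q) = 0` otherwise. -/
def sparseBody (S : Set (Cube N)) (f : (Fin N → ℝ) → Fin d → ℝ) (x : Fin N → ℝ) :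
    Set (Fin d → ℝ) :=
  {v | ∃ g : Cube N → Fin d → ℝ,
        (∀ Q : Cube N, Q ∈ S ∧ x ∈ Q.set → g Q ∈ cbAvg Q f) ∧
        (∀ Q : Cube N, ¬(Q ∈ S ∧ x ∈ Q.set) → g Q = 0) ∧ HasSum g v}

/-- The `S`-children of `Q`: maximal cubes of `S` strictly contained in `Q`. -/
def sChildren (S : Set (Cube N)) (Q : Cube N) : Set (Cube N) :=
  {R | R ∈ S ∧ R.set ⊂ Q.set ∧ ¬∃ R' ∈ S, R.set ⊂ R'.set ∧ R'.set ⊂ Q.set}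

/-- A classical `ε`-sparse family of dyadic cubes: `Σ_{R ∈ ch_S(Q)} |R| ≤ ε |Q|`. -/
def EpsSparse (S : Set (Cube N)) (ε : ℝ) : Prop :=
  (∀ Q ∈ S, Q.IsDyadic) ∧
  ∀ Q ∈ S, ∀ F : Finset (Cube N), ↑F ⊆ sChildren S Q → ∑ R ∈ F, R.vol ≤ ε * Q.vol

/-- A dyadic `λ`-Carleson family: `Σ_{R ∈ S, R ⊆ Q} |R| ≤ λ |Q|` for all `Q ∈ S`. -/
def DyadicCarleson (S : Set (Cube N)) (lam : ℝ) : Prop :=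
  (∀ Q ∈ S, Q.IsDyadic) ∧
  ∀ Q ∈ S, ∀ F : Finset (Cube N), (↑F ⊆ {R | R ∈ S ∧ R.set ⊆ Q.set}) →
    ∑ R ∈ F, R.vol ≤ lam * Q.vol

/-- A simple sparse family: every cube of `S` has at most one `S`-child. -/
def SimpleSparse (S : Set (Cube N)) : Prop :=
  (∀ Q ∈ S, Q.IsDyadic) ∧ ∀ Q ∈ S, (sChildren S Q).Subsingleton

end CBD

end

open Module

section ConvexGeometry

variable {E : Type*} [NormedAddCommGroup E] [NormedSpace ℝ E]

theorem Module.Basis.continuous_det {ι : Type*} [Fintype ι] [DecidableEq ι] (e : Basis ι ℝ E) :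
    Continuous e.det := by
  have : ⇑e.det = fun w : ι → E => (Matrix.of fun i j => e.equivFunL (w j) i).det := by
    ext w; rw [e.det_apply]; rfl
  rw [this]
  fun_prop

/-- An exact maximiser of `|det|` over `P` need not exist, as `P` need not be closed; a tuple with
determinant above half the supremum gives the bound `2` by Cramer's rule. -/
theorem exists_basis_mem_abs_coord_le_two [FiniteDimensional ℝ E] {P : Set E}
    (hP : Bornology.IsBounded P) (hspan : Submodule.span ℝ P = ⊤) :
    ∃ b : Basis (Fin (finrank ℝ E)) ℝ E, (∀ i, b i ∈ P) ∧ ∀ u ∈ P, ∀ i, |b.coord i u| ≤ 2 := by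
  classical
  let e := Module.finBasis ℝ E
  let tuples : Set (Fin (finrank ℝ E) → E) := univ.pi fun _ => P
  let dets : Set ℝ := (fun w => |e.det w|) '' tuples
  have hdets : BddAbove dets := by
    obtain ⟨M, hM⟩ := ((Bornology.IsBounded.pi fun _ => hP).isCompact_closure.image
      e.continuous_det.abs).bddAbove
    exact ⟨M, fun _ ⟨w, hw, hx⟩ => hM ⟨w, subset_closure hw, hx⟩⟩
  obtain ⟨s, hsP, hs_span, hs_li⟩ := exists_linearIndependent ℝ P
  let B := Basis.mk hs_li (by rw [Subtype.range_coe, hs_span, hspan])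
  let b₀ := B.reindex (B.indexEquiv e)
  have hb₀ : |e.det b₀| ∈ dets := ⟨b₀, fun i _ => hsP (by simp [b₀, B]), rfl⟩
  have hM : 0 < sSup dets :=
    (abs_pos.2 (e.isUnit_det b₀).ne_zero).trans_le (le_csSup hdets hb₀)
  obtain ⟨_, ⟨w, hw, rfl⟩, hw_large⟩ := exists_lt_of_lt_csSup ⟨_, hb₀⟩ (half_lt_self hM)
  simp only at hw_large
  have hw_det : e.det w ≠ 0 := fun h => by rw [h, abs_zero] at hw_large; linarith
  have hw_basis := (e.is_basis_iff_det (v := w)).2 hw_det.isUnit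
  refine ⟨Basis.mk hw_basis.1 hw_basis.2.ge, fun i => by simpa using hw i trivial, ?_⟩
  intro u hu i
  have hcramer := congrArg (· u) (e.det_smul_mk_coord_eq_det_update hw_basis.1 hw_basis.2.ge i)
  simp only [LinearMap.smul_apply, smul_eq_mul, MultilinearMap.toLinearMap_apply] at hcramer
  have hupd : |e.det (Function.update w i u)| ≤ sSup dets := by
    refine le_csSup hdets ⟨_, fun j _ => ?_, rfl⟩
    rcases eq_or_ne j i with rfl | hji
    · simpa using hu
    · simpa [hji] using hw j trivial
  have hpos : 0 < |e.det w| := abs_pos.2 hw_det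
  calc |(Basis.mk hw_basis.1 hw_basis.2.ge).coord i u|
      = |e.det (Function.update w i u)| / |e.det w| := by
        rw [eq_div_iff hpos.ne', mul_comm, ← abs_mul, hcramer]
        rfl
    _ ≤ sSup dets / (sSup dets / 2) := by gcongr
    _ = 2 := by field_simp

/-- A basis of `span K` as above, extended by a basis of a complement. -/
theorem exists_basis_mem_or_coord_eq_zero [FiniteDimensional ℝ E] {K : Set E}
    (hK : Bornology.IsBounded K) :
    ∃ b : Basis (Fin (finrank ℝ E)) ℝ E, ∀ i,
      (b i ∈ K ∧ ∀ u ∈ K, |b.coord i u| ≤ 2) ∨ ∀ u ∈ K, b.coord i u = 0 := by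
  classical
  set W := Submodule.span ℝ K
  obtain ⟨a, haK, ha⟩ := exists_basis_mem_abs_coord_le_two (E := W) (P := (↑) ⁻¹' K)
    (isometry_subtype_coe.antilipschitz.isBounded_preimage hK) Submodule.span_span_coe_preimage
  obtain ⟨C, hWC⟩ := W.exists_isCompl
  let bb := (a.prod (finBasis ℝ C)).map (W.prodEquivOfIsCompl C hWC)
  have hbb_repr : ∀ u (hu : u ∈ K) σ,
      bb.repr u σ = Sum.elim (a.repr ⟨u, Submodule.subset_span hu⟩) 0 σ := by
    intro u hu σ
    have : (W.prodEquivOfIsCompl C hWC).symm u = (⟨u, Submodule.subset_span hu⟩, 0) :=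
      W.prodEquivOfIsCompl_symm_apply_left C hWC ⟨u, _⟩
    rcases σ with j | j <;> simp [bb, Basis.map_repr, this]
  let σ := Fintype.equivFinOfCardEq (finrank_eq_card_basis bb).symm
  refine ⟨bb.reindex σ, fun i => ?_⟩
  simp only [Basis.coord_apply, Basis.repr_reindex_apply, Basis.reindex_apply]
  rcases hi : σ.symm i with j | j
  · refine .inl ⟨by simpa [bb] using haK j, fun u hu => ?_⟩
    rw [hbb_repr u hu]
    exact ha _ hu j
  · exact .inr fun u hu => by simp [hbb_repr u hu]

theorem AbsConvex.sum_smul_mem_smul {K : Set E} (hK : AbsConvex ℝ K) (hne : K.Nonempty)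
    {ι : Type*} (s : Finset ι) (t : ι → ℝ) {u : ι → E} (hu : ∀ i ∈ s, u i ∈ K) :
    ∑ i ∈ s, t i • u i ∈ (∑ i ∈ s, |t i|) • K := by
  induction s using Finset.cons_induction with
  | empty => simp [Set.zero_smul_set hne]
  | cons a s ha ih =>
    rw [Finset.sum_cons, Finset.sum_cons,
      hK.2.add_smul (abs_nonneg _) (Finset.sum_nonneg fun i _ => abs_nonneg _)]
    refine Set.add_mem_add ?_ (ih fun i hi => hu i (Finset.mem_cons_of_mem hi))
    rw [← hK.1.smul_congr (a := t a) (by simp)]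
    exact Set.smul_mem_smul_set (hu a (Finset.mem_cons_self a s))

theorem exists_dual_mem_smul_of_abs_le [FiniteDimensional ℝ E] {K : Set E}
    (hK : AbsConvex ℝ K) (hKb : Bornology.IsBounded K) (hne : K.Nonempty) :
    ∃ Φ : Fin (finrank ℝ E) → Module.Dual ℝ E, ∀ A : ℝ, 0 ≤ A → ∀ v : E,
      (∀ j, ∃ u ∈ K, |Φ j v| ≤ A * Φ j u) → v ∈ (2 * finrank ℝ E * A) • K := by
  obtain ⟨b, hb⟩ := exists_basis_mem_or_coord_eq_zero hKb
  refine ⟨b.coord, fun A hA v hv => ?_⟩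
  have hterm : ∀ j, ∃ w ∈ K, |b.coord j v| ≤ 2 * A ∧ b.coord j v • b j = b.coord j v • w := by
    intro j
    obtain ⟨u, hu, hvu⟩ := hv j
    rcases hb j with ⟨hbK, hcoord⟩ | hzero
    · refine ⟨b j, hbK, hvu.trans ?_, rfl⟩
      nlinarith [le_of_abs_le (hcoord u hu)]
    · rw [hzero u hu, mul_zero, abs_nonpos_iff] at hvu
      exact ⟨u, hu, by simp [hvu, hA], by simp [hvu]⟩
  choose w hwK hcoord hw using hterm
  have hv_eq : v = ∑ j, b.coord j v • w j := by
    simp_rw [← hw, Basis.coord_apply]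
    exact (b.sum_repr v).symm
  rw [hv_eq]
  refine hK.1.smul_mono ?_ (hK.sum_smul_mem_smul hne Finset.univ _ fun j _ => hwK j)
  rw [Real.norm_of_nonneg (Finset.sum_nonneg fun j _ => abs_nonneg _),
    Real.norm_of_nonneg (by positivity)]
  calc ∑ j, |b.coord j v| ≤ ∑ _j : Fin (finrank ℝ E), 2 * A :=
        Finset.sum_le_sum fun j _ => hcoord j
    _ = 2 * finrank ℝ E * A := by simp; ring

end ConvexGeometry

theorem Finset.sum_le_card_mul_of_subset_iUnion {α ι : Type*} [Fintype ι] {w : α → ℝ}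
    (hw : ∀ a, 0 ≤ w a) {G : ι → Set α} {c : ℝ}
    (hG : ∀ j (F : Finset α), ↑F ⊆ G j → ∑ a ∈ F, w a ≤ c) {F : Finset α}
    (hF : ↑F ⊆ ⋃ j, G j) : ∑ a ∈ F, w a ≤ Fintype.card ι * c := by
  classical
  calc ∑ a ∈ F, w a ≤ ∑ a ∈ F, ∑ j, if a ∈ G j then w a else 0 := by
        refine Finset.sum_le_sum fun a ha => ?_
        obtain ⟨j, hj⟩ := mem_iUnion.1 (hF ha)
        calc w a = if a ∈ G j then w a else 0 := (if_pos hj).symm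
          _ ≤ _ := Finset.single_le_sum (f := fun j => if a ∈ G j then w a else 0)
              (fun j _ => by split_ifs <;> simp [hw]) (Finset.mem_univ j)
    _ = ∑ j, ∑ a ∈ F with a ∈ G j, w a := by
        rw [Finset.sum_comm]; simp only [Finset.sum_filter]
    _ ≤ ∑ _j : ι, c := Finset.sum_le_sum fun j _ => hG j _ fun a ha => (Finset.mem_filter.1 ha).2
    _ = Fintype.card ι * c := by simp

theorem Ico_mul_subset_of_mem {s : ℝ} (hs : 0 < s) {p m m' : ℤ} {x : ℝ}
    (hx : x ∈ Ico (s * (p * m)) (s * (p * (m + 1))))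
    (hx' : x ∈ Ico (s * m') (s * (m' + 1))) :
    Ico (s * m') (s * (m' + 1)) ⊆ Ico (s * (p * m)) (s * (p * (m + 1))) := by
  have h₁ : p * m < m' + 1 := by exact_mod_cast (mul_lt_mul_iff_right₀ hs).1 (hx.1.trans_lt hx'.2)
  have h₂ : m' < p * (m + 1) := by exact_mod_cast (mul_lt_mul_iff_right₀ hs).1 (hx'.1.trans_lt hx.2)
  refine Ico_subset_Ico (mul_le_mul_of_nonneg_left ?_ hs.le) (mul_le_mul_of_nonneg_left ?_ hs.le)
  · exact_mod_cast Int.lt_add_one_iff.1 h₁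
  · exact_mod_cast h₂

namespace CBD

lemma Cube.vol_pos {N : ℕ} (Q : Cube N) : 0 < Q.vol := pow_pos Q.side_pos N

lemma Cube.corner_mem_set {N : ℕ} (Q : Cube N) : Q.corner ∈ Q.set :=
  fun _ => ⟨le_rfl, lt_add_of_pos_right _ Q.side_pos⟩

section ConvexBodyAverage

variable {N d : ℕ}

lemma integrable_smul_of_abs_le_one {f : (Fin N → ℝ) → Fin d → ℝ} (hf : Integrable f volume)
    {ψ : (Fin N → ℝ) → ℝ} (hψ : Measurable ψ) (hψ1 : ∀ x, |ψ x| ≤ 1) :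
    Integrable (fun x => ψ x • f x) volume :=
  hf.bdd_smul 1 hψ.aestronglyMeasurable (ae_of_all _ hψ1)

lemma avg_apply_eq_smul_integral {Q : Cube N} {g : (Fin N → ℝ) → Fin d → ℝ}
    (hg : IntegrableOn g Q.set) :
    (fun i => avg Q fun x => g x i) = (Q.vol)⁻¹ • ∫ x in Q.set, g x := by
  ext i
  simp [avg, eval_integral (fun i => hg.eval i)]

lemma map_avg (φ : Module.Dual ℝ (Fin d → ℝ)) {Q : Cube N} {g : (Fin N → ℝ) → Fin d → ℝ}
    (hg : IntegrableOn g Q.set) :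
    φ (fun i => avg Q fun x => g x i) = avg Q fun x => φ (g x) := by
  rw [avg_apply_eq_smul_integral hg, map_smul, smul_eq_mul, avg]
  exact congrArg _ ((LinearMap.toContinuousLinearMap φ).integral_comp_comm hg).symm

lemma abs_avg_le_avg {Q : Cube N} {g h : (Fin N → ℝ) → ℝ} (hh : IntegrableOn h Q.set)
    (hgh : ∀ x, |g x| ≤ h x) : |avg Q g| ≤ avg Q h := by
  rw [avg, avg, abs_mul, abs_of_pos (inv_pos.2 Q.vol_pos)]
  exact mul_le_mul_of_nonneg_left (norm_integral_le_of_norm_le hh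
    (ae_of_all _ fun x => (Real.norm_eq_abs _).trans_le (hgh x))) (inv_nonneg.2 Q.vol_pos.le)

lemma abs_map_le_avg_of_mem_cbAvg (φ : Module.Dual ℝ (Fin d → ℝ)) {Q : Cube N}
    {f : (Fin N → ℝ) → Fin d → ℝ} (hf : Integrable f volume) {u : Fin d → ℝ}
    (hu : u ∈ cbAvg Q f) : |φ u| ≤ avg Q fun y => |φ (f y)| := by
  obtain ⟨ψ, hψ, hψ1, rfl⟩ := hu
  have hint := integrable_smul_of_abs_le_one hf hψ hψ1
  rw [show (fun i => avg Q fun x => ψ x * f x i) = fun i => avg Q fun x => (ψ x • f x) i from rfl,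
    map_avg φ hint.integrableOn]
  refine abs_avg_le_avg ((LinearMap.toContinuousLinearMap φ).integrable_comp hf).abs.integrableOn
    fun x => ?_
  rw [map_smul, smul_eq_mul, abs_mul]
  exact mul_le_of_le_one_left (abs_nonneg _) (hψ1 x)

lemma exists_mem_cbAvg_map_eq_avg (φ : Module.Dual ℝ (Fin d → ℝ)) (Q : Cube N)
    {f : (Fin N → ℝ) → Fin d → ℝ} (hf : Integrable f volume) :
    ∃ u ∈ cbAvg Q f, φ u = avg Q fun y => |φ (f y)| := by
  have hφf : AEStronglyMeasurable (fun y => φ (f y)) volume :=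
    ((LinearMap.toContinuousLinearMap φ).integrable_comp hf).1
  let ψ : (Fin N → ℝ) → ℝ := fun y => if 0 ≤ hφf.mk _ y then 1 else -1
  have hψ : Measurable ψ := Measurable.ite
    (measurableSet_le measurable_const hφf.stronglyMeasurable_mk.measurable)
    measurable_const measurable_const
  have hψ1 : ∀ y, |ψ y| ≤ 1 := fun y => by simp only [ψ]; split_ifs <;> norm_num
  refine ⟨_, ⟨ψ, hψ, hψ1, rfl⟩, ?_⟩
  rw [show (fun i => avg Q fun x => ψ x * f x i) = fun i => avg Q fun x => (ψ x • f x) i from rfl,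
    map_avg φ (integrable_smul_of_abs_le_one hf hψ hψ1).integrableOn, avg, avg]
  congr 1
  refine integral_congr_ae (ae_restrict_of_ae ?_)
  filter_upwards [hφf.ae_eq_mk] with y hy
  simp only [map_smul, smul_eq_mul, ψ, ← hy]
  split_ifs with h
  · rw [abs_of_nonneg h, one_mul]
  · rw [abs_of_neg (not_le.1 h), neg_one_mul]

lemma zero_mem_cbAvg (Q : Cube N) (f : (Fin N → ℝ) → Fin d → ℝ) : (0 : Fin d → ℝ) ∈ cbAvg Q f :=
  ⟨0, measurable_const, by simp, by ext; simp [avg]⟩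

lemma convex_cbAvg (Q : Cube N) {f : (Fin N → ℝ) → Fin d → ℝ} (hf : Integrable f volume) :
    Convex ℝ (cbAvg Q f) := by
  rintro _ ⟨ψ, hψ, hψ1, rfl⟩ _ ⟨χ, hχ, hχ1, rfl⟩ a b ha hb hab
  refine ⟨fun x => a * ψ x + b * χ x, by fun_prop, fun x => ?_, ?_⟩
  · calc |a * ψ x + b * χ x| ≤ a * |ψ x| + b * |χ x| := by
          simpa [abs_mul, abs_of_nonneg ha, abs_of_nonneg hb] using abs_add_le (a * ψ x) (b * χ x)
      _ ≤ a * 1 + b * 1 := by gcongr <;> simp [hψ1, hχ1]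
      _ = 1 := by rw [mul_one, mul_one, hab]
  have hψf := (integrable_smul_of_abs_le_one hf hψ hψ1).integrableOn (s := Q.set)
  have hχf := (integrable_smul_of_abs_le_one hf hχ hχ1).integrableOn (s := Q.set)
  have hcomb : (fun x => (a * ψ x + b * χ x) • f x) = fun x => a • ψ x • f x + b • χ x • f x := by
    ext x; simp only [add_smul, mul_smul]
  change a • (fun i => avg Q fun x => (ψ x • f x) i) + b • (fun i => avg Q fun x => (χ x • f x) i)
    = fun i => avg Q fun x => ((a * ψ x + b * χ x) • f x) i
  rw [avg_apply_eq_smul_integral hψf, avg_apply_eq_smul_integral hχf,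
    avg_apply_eq_smul_integral (hcomb ▸ (hψf.smul a).add (hχf.smul b)), hcomb,
    integral_add (f := fun x => a • ψ x • f x) (g := fun x => b • χ x • f x) (hψf.smul a)
      (hχf.smul b), integral_smul, integral_smul]
  module

lemma balanced_cbAvg (Q : Cube N) {f : (Fin N → ℝ) → Fin d → ℝ} (hf : Integrable f volume) :
    Balanced ℝ (cbAvg Q f) := by
  refine (balanced_iff_neg_mem (convex_cbAvg Q hf)).2 ?_
  rintro _ ⟨ψ, hψ, hψ1, rfl⟩
  exact ⟨-ψ, hψ.neg, by simpa using hψ1, by ext; simp [avg, integral_neg]⟩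

lemma isBounded_cbAvg (Q : Cube N) {f : (Fin N → ℝ) → Fin d → ℝ} (hf : Integrable f volume) :
    Bornology.IsBounded (cbAvg Q f) := by
  refine Bornology.forall_isBounded_image_eval_iff.1 fun i => ?_
  refine (Metric.isBounded_Icc (-avg Q fun y => |f y i|) (avg Q fun y => |f y i|)).subset ?_
  rintro _ ⟨u, hu, rfl⟩
  exact abs_le.1 (abs_map_le_avg_of_mem_cbAvg (LinearMap.proj i) hf hu)

end ConvexBodyAverage

section DyadicCubes

variable {N : ℕ}

lemma Cube.corner_le_of_set_subset {Q R : Cube N} (h : Q.set ⊆ R.set) (i : Fin N) :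
    R.corner i ≤ Q.corner i ∧ Q.corner i + Q.side ≤ R.corner i + R.side := by
  refine ⟨(h Q.corner_mem_set i).1, not_lt.1 fun hlt => ?_⟩
  let y := Function.update Q.corner i (max (Q.corner i) (R.corner i + R.side))
  have hy : y ∈ Q.set := by
    intro j
    rcases eq_or_ne j i with rfl | hji
    · simp only [y, Function.update_self]
      exact ⟨le_max_left _ _, max_lt (lt_add_of_pos_right _ Q.side_pos) hlt⟩
    · simpa [y, hji] using Q.corner_mem_set j
  have := (h hy i).2
  simp only [y, Function.update_self] at this
  exact (le_max_right _ _).not_gt this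

lemma Cube.side_le_of_set_subset (hN : 0 < N) {Q R : Cube N} (h : Q.set ⊆ R.set) :
    Q.side ≤ R.side := by
  have := Cube.corner_le_of_set_subset h ⟨0, hN⟩
  linarith

lemma Cube.eq_of_set_subset_of_side_eq {Q R : Cube N} (h : Q.set ⊆ R.set)
    (hside : Q.side = R.side) : Q = R := by
  have hcorner : Q.corner = R.corner := funext fun i => by
    have := Cube.corner_le_of_set_subset h i
    linarith
  cases Q; cases R
  simp_all

lemma Cube.IsDyadic.set_subset_or_disjoint {Q R : Cube N} (hQ : Q.IsDyadic) (hR : R.IsDyadic)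
    (hside : R.side ≤ Q.side) : R.set ⊆ Q.set ∨ Disjoint R.set Q.set := by
  obtain ⟨k, m, hk, hm⟩ := hQ
  obtain ⟨k', m', hk', hm'⟩ := hR
  obtain ⟨n, rfl⟩ : ∃ n : ℕ, k' = k + n := by
    rw [hk, hk'] at hside
    have := (zpow_le_zpow_iff_right₀ (a := (2:ℝ)) one_lt_two).1 hside
    exact ⟨(k' - k).toNat, by omega⟩
  set s : ℝ := 2 ^ (-(k + n)) with hs
  have hscale : (2:ℝ) ^ (-k) = s * ((2 ^ n : ℤ) : ℝ) := by
    rw [hs, neg_add, zpow_add₀ two_ne_zero, mul_assoc]; push_cast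
    rw [← zpow_natCast, ← zpow_add₀ two_ne_zero]; simp
  have hQi : ∀ i, Ico (Q.corner i) (Q.corner i + Q.side) =
      Ico (s * ((2 ^ n : ℤ) * m i)) (s * ((2 ^ n : ℤ) * (m i + 1))) := by
    intro i; rw [hm i, hk, hscale]; ring_nf
  have hRi : ∀ i, Ico (R.corner i) (R.corner i + R.side) = Ico (s * m' i) (s * (m' i + 1)) := by
    intro i; rw [hm' i, hk']; ring_nf
  by_cases hx : ∃ x, x ∈ R.set ∧ x ∈ Q.set
  · obtain ⟨x, hxR, hxQ⟩ := hx
    refine .inl fun y hy i => ?_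
    have hsub := Ico_mul_subset_of_mem (zpow_pos two_pos _)
      (by rw [← hQi i]; exact hxQ i) (by rw [← hRi i]; exact hxR i)
    rw [← hQi, ← hRi] at hsub
    exact hsub (hy i)
  · exact .inr (Set.disjoint_left.2 fun x hxR hxQ => hx ⟨x, hxR, hxQ⟩)

def maximalCubes (G : Set (Cube N)) : Set (Cube N) :=
  {Q | Q ∈ G ∧ ∀ R ∈ G, Q.set ⊆ R.set → R = Q}

lemma maximalCubes_subset (G : Set (Cube N)) : maximalCubes G ⊆ G := fun _ hQ => hQ.1

lemma pairwiseDisjoint_maximalCubes {G : Set (Cube N)} (hG : ∀ Q ∈ G, Q.IsDyadic) :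
    (maximalCubes G).PairwiseDisjoint Cube.set := by
  intro Q hQ R hR hne
  rcases le_total R.side Q.side with hs | hs
  · rcases (hG Q hQ.1).set_subset_or_disjoint (hG R hR.1) hs with hsub | hdis
    · exact absurd (hR.2 Q hQ.1 hsub) hne
    · exact hdis.symm
  · rcases (hG R hR.1).set_subset_or_disjoint (hG Q hQ.1) hs with hsub | hdis
    · exact absurd (hQ.2 R hR.1 hsub) (Ne.symm hne)
    · exact hdis

lemma exists_mem_maximalCubes_superset (hN : 0 < N) {G : Set (Cube N)}
    (hG : ∀ Q ∈ G, Q.IsDyadic) {L : ℝ} (hL : ∀ Q ∈ G, Q.side ≤ L) {Q : Cube N} (hQ : Q ∈ G) :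
    ∃ R ∈ maximalCubes G, Q.set ⊆ R.set := by
  let gens : ℤ → Prop := fun k => ∃ R ∈ G, Q.set ⊆ R.set ∧ R.side = 2 ^ (-k)
  obtain ⟨n, hn⟩ := pow_unbounded_of_one_lt L one_lt_two
  have hbdd : ∃ b : ℤ, ∀ k, gens k → b ≤ k := by
    refine ⟨-n, fun k ⟨R, hR, _, hRk⟩ => ?_⟩
    have : (2:ℝ) ^ (-k) < 2 ^ (n : ℤ) := by rw [← hRk, zpow_natCast]; exact (hL R hR).trans_lt hn
    have := (zpow_lt_zpow_iff_right₀ one_lt_two).1 this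
    omega
  obtain ⟨kQ, -, hkQ, -⟩ := hG Q hQ
  obtain ⟨k, ⟨R, hR, hQR, hRk⟩, hk⟩ := Int.exists_least_of_bdd hbdd ⟨kQ, Q, hQ, le_rfl, hkQ⟩
  refine ⟨R, ⟨hR, fun R' hR' hRR' => ?_⟩, hQR⟩
  obtain ⟨k', -, hk', -⟩ := hG R' hR'
  have hle : R'.side ≤ R.side := by
    rw [hk', hRk]
    exact zpow_le_zpow_right₀ one_le_two (neg_le_neg (hk k' ⟨R', hR', hQR.trans hRR', hk'⟩))
  exact (Cube.eq_of_set_subset_of_side_eq hRR'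
    (le_antisymm (Cube.side_le_of_set_subset hN hRR') hle)).symm

theorem exists_pairwiseDisjoint_dyadic_cover (hN : 0 < N) {ι : Type*} [Fintype ι]
    {Q₀ : Cube N} {G : ι → Set (Cube N)} (hG : ∀ j, ∀ Q ∈ G j, Q.IsDyadic ∧ Q.set ⊆ Q₀.set)
    {c : ℝ} (hG_sum : ∀ j (F : Finset (Cube N)), ↑F ⊆ G j → ∑ Q ∈ F, Q.vol ≤ c) :
    ∃ G₁ : Set (Cube N), (∀ Q ∈ G₁, Q.IsDyadic ∧ Q.set ⊆ Q₀.set) ∧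
      G₁.PairwiseDisjoint Cube.set ∧
      (∀ F : Finset (Cube N), ↑F ⊆ G₁ → ∑ Q ∈ F, Q.vol ≤ Fintype.card ι * c) ∧
      ∀ j, ∀ Q ∈ G j, ∃ R ∈ G₁, Q.set ⊆ R.set := by
  have hG_union : ∀ Q ∈ ⋃ j, G j, Q.IsDyadic ∧ Q.set ⊆ Q₀.set := fun Q hQ => by
    obtain ⟨j, hj⟩ := mem_iUnion.1 hQ
    exact hG j Q hj
  refine ⟨maximalCubes (⋃ j, G j), fun Q hQ => hG_union Q (maximalCubes_subset _ hQ),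
    pairwiseDisjoint_maximalCubes fun Q hQ => (hG_union Q hQ).1, fun F hF => ?_,
    fun j Q hQ => ?_⟩
  · exact Finset.sum_le_card_mul_of_subset_iUnion (fun Q => Q.vol_pos.le) hG_sum
      (hF.trans (maximalCubes_subset _))
  · exact exists_mem_maximalCubes_superset hN (fun Q hQ => (hG_union Q hQ).1)
      (fun Q hQ => Cube.side_le_of_set_subset hN (hG_union Q hQ).2) (mem_iUnion.2 ⟨j, hQ⟩)

end DyadicCubes

section Localization

variable {N d : ℕ}

lemma map_tsum_indicator {ι X M M' F : Type*} [AddCommMonoid M] [TopologicalSpace M]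
    [AddCommMonoid M'] [TopologicalSpace M'] [FunLike F M M'] [AddMonoidHomClass F M M']
    (φ : F) {G : Set ι} {s : ι → Set X} (hG : G.PairwiseDisjoint s) (g : ι → X → M) (x : X) :
    φ (∑' i : G, (s i).indicator (g i) x) = ∑' i : G, (s i).indicator (fun y => φ (g i y)) x := by
  by_cases hx : ∃ i ∈ G, x ∈ s i
  · obtain ⟨i, hi, hxi⟩ := hx
    have hne : ∀ j : G, j ≠ ⟨i, hi⟩ → x ∉ s j := fun j hj hxj =>
      disjoint_left.1 (hG j.2 hi fun h => hj (Subtype.ext h)) hxj hxi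
    rw [tsum_eq_single ⟨i, hi⟩ fun j hj => indicator_of_notMem (hne j hj) _,
      tsum_eq_single ⟨i, hi⟩ fun j hj => indicator_of_notMem (hne j hj) _]
    simp [indicator_of_mem hxi]
  · push Not at hx
    simp [indicator_of_notMem (hx _ (Subtype.prop _))]

lemma map_vecApply {T : ((Fin N → ℝ) → ℝ) → ((Fin N → ℝ) → ℝ)} (hlin : IsLinearMap ℝ T)
    (φ : Module.Dual ℝ (Fin d → ℝ)) (f : (Fin N → ℝ) → Fin d → ℝ) (x : Fin N → ℝ) :
    φ (vecApply T f x) = T (fun y => φ (f y)) x := by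
  classical
  have hφ : (fun y => φ (f y)) = ∑ i, φ (fun j => if i = j then 1 else 0) • fun y => f y i := by
    ext y; simp [φ.pi_apply_eq_sum_univ (f y), mul_comm]
  rw [hφ, ← IsLinearMap.mk'_apply hlin, map_sum, φ.pi_apply_eq_sum_univ]
  simp [vecApply, mul_comm]

lemma map_vecApply_sub_tsum_indicator {T : ((Fin N → ℝ) → ℝ) → ((Fin N → ℝ) → ℝ)}
    (hlin : IsLinearMap ℝ T) (φ : Module.Dual ℝ (Fin d → ℝ)) {ι : Type*} {G : Set ι}
    {s : ι → Set (Fin N → ℝ)} (hG : G.PairwiseDisjoint s) (t : ι → Set (Fin N → ℝ))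
    (f : (Fin N → ℝ) → Fin d → ℝ) (x : Fin N → ℝ) :
    φ (vecApply T f x - ∑' i : G, (s i).indicator
        (fun x' => vecApply T ((t i).indicator f) x') x) =
      T (fun y => φ (f y)) x - ∑' i : G, (s i).indicator
        (fun x' => T ((t i).indicator fun y => φ (f y)) x') x := by
  have hind : ∀ i, (fun y => φ ((t i).indicator f y)) = (t i).indicator fun y => φ (f y) :=
    fun i => (indicator_comp_of_zero (map_zero φ)).symm
  rw [map_sub, map_vecApply hlin,
    map_tsum_indicator φ hG (fun i x' => vecApply T ((t i).indicator f) x') x]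
  simp only [map_vecApply hlin, hind]

end Localization

theorem scalar_to_vector_induction_step_general
    (N d : ℕ) (hN : 0 < N) (hd : 0 < d) (r : ℝ)
    (T : ((Fin N → ℝ) → ℝ) → ((Fin N → ℝ) → ℝ)) (hlin : IsLinearMap ℝ T)
    (C : ℝ) (hC : 0 < C)
    (hyp : ∀ ε : ℝ, 0 < ε → ∀ Q₀ : Cube N, Q₀.IsDyadic →
      ∀ f : (Fin N → ℝ) → ℝ, Integrable f volume →
        (∀ x, x ∉ (Q₀.dilate r).set → f x = 0) →
        ∃ G : Set (Cube N),
          (∀ Q ∈ G, Q.IsDyadic ∧ Q.set ⊆ Q₀.set) ∧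
          G.PairwiseDisjoint Cube.set ∧
          (∀ F : Finset (Cube N), ↑F ⊆ G → ∑ Q ∈ F, Q.vol ≤ ε * Q₀.vol) ∧
          (∀ᵐ x ∂(volume.restrict Q₀.set),
            |T f x - ∑' Q : G, Set.indicator (Q : Cube N).set
                (fun x' => T (Set.indicator ((Q : Cube N).dilate r).set f) x') x|
              ≤ C * ε⁻¹ * avg (Q₀.dilate r) fun y => |f y|) ∧
          (∀ G' : Set (Cube N), (∀ R ∈ G', R.IsDyadic ∧ R.set ⊆ Q₀.set) →
            G'.PairwiseDisjoint Cube.set → (∀ Q ∈ G, ∃ R ∈ G', Q.set ⊆ R.set) →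
            ∀ᵐ x ∂(volume.restrict Q₀.set),
              |T f x - ∑' Q : G', Set.indicator (Q : Cube N).set
                  (fun x' => T (Set.indicator ((Q : Cube N).dilate r).set f) x') x|
                ≤ C * ε⁻¹ * avg (Q₀.dilate r) fun y => |f y|)) :
    ∀ δ : ℝ, 0 < δ → δ < 1 →
      ∃ C' : ℝ, 0 < C' ∧
        ∀ Q₀ : Cube N, Q₀.IsDyadic →
          ∀ f : (Fin N → ℝ) → Fin d → ℝ, Integrable f volume →
            (∀ x, x ∉ (Q₀.dilate r).set → f x = 0) →
            ∃ G₁ : Set (Cube N),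
              (∀ Q ∈ G₁, Q.IsDyadic ∧ Q.set ⊆ Q₀.set) ∧
              G₁.PairwiseDisjoint Cube.set ∧
              (∀ F : Finset (Cube N), ↑F ⊆ G₁ → ∑ Q ∈ F, Q.vol ≤ δ * Q₀.vol) ∧
              ∀ᵐ x ∂(volume.restrict Q₀.set),
                vecApply T f x - (∑' Q : G₁, Set.indicator (Q : Cube N).set
                    (fun x' => vecApply T (Set.indicator ((Q : Cube N).dilate r).set f) x') x)
                  ∈ C' • cbAvg (Q₀.dilate r) f := by
  intro δ hδ _
  set ε := δ / d
  have hε : 0 < ε := by positivity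
  set A := C * ε⁻¹
  have hA : 0 < A := by positivity
  refine ⟨2 * d * A, by positivity, fun Q₀ hQ₀ f hf hf_supp => ?_⟩
  obtain ⟨Φ, hΦ⟩ := exists_dual_mem_smul_of_abs_le (K := cbAvg (Q₀.dilate r) f)
    ⟨balanced_cbAvg _ hf, convex_cbAvg _ hf⟩ (isBounded_cbAvg _ hf) ⟨0, zero_mem_cbAvg _ f⟩
  choose G hG_sub _ hG_sum _ hG_cover using fun j => hyp ε hε Q₀ hQ₀ (fun y => Φ j (f y))
    ((LinearMap.toContinuousLinearMap (Φ j)).integrable_comp hf)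
    (fun x hx => by simp [hf_supp x hx])
  obtain ⟨G₁, hG₁_sub, hG₁_disj, hG₁_sum, hG₁_cover⟩ :=
    exists_pairwiseDisjoint_dyadic_cover hN hG_sub hG_sum
  refine ⟨G₁, hG₁_sub, hG₁_disj, fun F hF => (hG₁_sum F hF).trans_eq (by simp [ε]; field_simp), ?_⟩
  filter_upwards [ae_all_iff.2 fun j => hG_cover j G₁ hG₁_sub hG₁_disj (hG₁_cover j)] with x hx
  rw [show (d : ℝ) = finrank ℝ (Fin d → ℝ) by simp]
  refine hΦ A hA.le _ fun j => ?_
  obtain ⟨u, hu, hΦu⟩ := exists_mem_cbAvg_map_eq_avg (Φ j) (Q₀.dilate r) hf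
  refine ⟨u, hu, ?_⟩
  rw [map_vecApply_sub_tsum_indicator hlin (Φ j) hG₁_disj (fun Q => (Q.dilate r).set), hΦu]
  exact hx j

/-- From scalar sparse-domination induction step to the vector-valued
(convex body) induction step. -/
theorem scalar_to_vector_induction_step
    (N d : ℕ) (hN : 0 < N) (hd : 0 < d) (r : ℝ) (hr : 1 ≤ r)
    (T : ((Fin N → ℝ) → ℝ) → ((Fin N → ℝ) → ℝ)) (hlin : IsLinearMap ℝ T)
    (C : ℝ) (hC : 0 < C)
    (hyp : ∀ ε : ℝ, 0 < ε → ∀ Q₀ : Cube N, Q₀.IsDyadic →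
      ∀ f : (Fin N → ℝ) → ℝ, Integrable f volume →
        (∀ x, x ∉ (Q₀.dilate r).set → f x = 0) →
        ∃ G : Set (Cube N),
          (∀ Q ∈ G, Q.IsDyadic ∧ Q.set ⊆ Q₀.set) ∧
          G.PairwiseDisjoint Cube.set ∧
          (∀ F : Finset (Cube N), ↑F ⊆ G → ∑ Q ∈ F, Q.vol ≤ ε * Q₀.vol) ∧
          (∀ᵐ x ∂(volume.restrict Q₀.set),
            |T f x - ∑' Q : G, Set.indicator (Q : Cube N).set
                (fun x' => T (Set.indicator ((Q : Cube N).dilate r).set f) x') x|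
              ≤ C * ε⁻¹ * avg (Q₀.dilate r) fun y => |f y|) ∧
          (∀ G' : Set (Cube N), (∀ R ∈ G', R.IsDyadic ∧ R.set ⊆ Q₀.set) →
            G'.PairwiseDisjoint Cube.set → (∀ Q ∈ G, ∃ R ∈ G', Q.set ⊆ R.set) →
            ∀ᵐ x ∂(volume.restrict Q₀.set),
              |T f x - ∑' Q : G', Set.indicator (Q : Cube N).set
                  (fun x' => T (Set.indicator ((Q : Cube N).dilate r).set f) x') x|
                ≤ C * ε⁻¹ * avg (Q₀.dilate r) fun y => |f y|)) :
    ∀ δ : ℝ, 0 < δ → δ < 1 →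
      ∃ C' : ℝ, 0 < C' ∧
        ∀ Q₀ : Cube N, Q₀.IsDyadic →
          ∀ f : (Fin N → ℝ) → Fin d → ℝ, Integrable f volume →
            (∀ x, x ∉ (Q₀.dilate r).set → f x = 0) →
            ∃ G₁ : Set (Cube N),
              (∀ Q ∈ G₁, Q.IsDyadic ∧ Q.set ⊆ Q₀.set) ∧
              G₁.PairwiseDisjoint Cube.set ∧
              (∀ F : Finset (Cube N), ↑F ⊆ G₁ → ∑ Q ∈ F, Q.vol ≤ δ * Q₀.vol) ∧
              ∀ᵐ x ∂(volume.restrict Q₀.set),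
                vecApply T f x - (∑' Q : G₁, Set.indicator (Q : Cube N).set
                    (fun x' => vecApply T (Set.indicator ((Q : Cube N).dilate r).set f) x') x)
                  ∈ C' • cbAvg (Q₀.dilate r) f :=
  scalar_to_vector_induction_step_general N d hN hd r T hlin C hC hyp

end CBD
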